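/- arXiv:1402.5100 — 3 statements merged into one kernel-verified Lean document; each statement's English description precedes it below -/
import Mathlib

section
/- Define Γ(m,k) as the number of bilaterally symmetric binary vectors of length m with exactly k ones, and Δ(m,k) = C(m,k) − Γ(m,k). Then for 1 ≤ k ≤ m-1 with m + k even, Δ(m,k) = Δ(m-1,k) + Δ(m-1,k-1). -/
/-- The number of bilaterally symmetric binary vectors of length `m`
with exactly `k` ones. -/
def Gamma (m k : ℕ) : ℕ :=
  Fintype.card {v : Fin m → Bool //
    (∀ i, v i = v i.rev) ∧ (Finset.univ.filter fun i => v i = true).card = k}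

/-- The number of non-self-twin games, as an integer. -/
def Delta (m k : ℕ) : ℤ := (Nat.choose m k : ℤ) - (Gamma m k : ℤ)

open Finset

private def cnt {m : ℕ} (w : Fin m → Bool) : ℕ :=
  (Finset.univ.filter fun i => w i = true).card

private lemma cnt_eq_sum {m : ℕ} (w : Fin m → Bool) :
    cnt w = ∑ i : Fin m, (if w i = true then 1 else 0) := by
  rw [cnt, Finset.card_filter]

private lemma card_cnt (n j : ℕ) :
    Fintype.card {u : Fin n → Bool // cnt u = j} = n.choose j := by
  have e : {u : Fin n → Bool // cnt u = j} ≃ {s : Finset (Fin n) // s.card = j} :=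
    { toFun := fun u => ⟨Finset.univ.filter fun i => u.1 i = true, u.2⟩
      invFun := fun s => ⟨fun i => decide (i ∈ s.1), by simpa [cnt] using s.2⟩
      left_inv := by rintro ⟨u, hu⟩; ext i; simp
      right_inv := by rintro ⟨s, hs⟩; ext i; simp }
  rw [Fintype.card_congr e, Fintype.card_subtype, ← Finset.powerset_univ,
    ← Finset.powersetCard_eq_filter, Finset.card_powersetCard, Finset.card_univ,
    Fintype.card_fin]

private lemma cnt_even {n : ℕ} (v : Fin (n+n) → Bool) (hs : ∀ i, v i = v i.rev) :
    cnt v = 2 * cnt (fun i : Fin n => v (Fin.castAdd n i)) := by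
  rw [cnt_eq_sum, Fin.sum_univ_add]
  have h2 : ∀ i : Fin n, v (Fin.natAdd n i) = v (Fin.castAdd n i.rev) := by
    intro i
    rw [Fin.natAdd_eq_addNat, hs (Fin.addNat i n), Fin.rev_addNat]
  simp_rw [h2]
  have h3 : ∑ i : Fin n, (if v (Fin.castAdd n i.rev) = true then 1 else 0)
      = ∑ i : Fin n, (if v (Fin.castAdd n i) = true then 1 else 0) :=
    Fintype.sum_equiv Fin.revPerm _ _ (fun i => rfl)
  rw [h3, cnt_eq_sum]
  ring

private def evenEquiv (n k : ℕ) :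
    {v : Fin (n+n) → Bool // (∀ i, v i = v i.rev) ∧ cnt v = k} ≃
    {w : Fin n → Bool // 2 * cnt w = k} where
  toFun v := ⟨fun i => v.1 (Fin.castAdd n i), by
    rw [← cnt_even v.1 v.2.1]; exact v.2.2⟩
  invFun w := by
    refine ⟨Fin.addCases w.1 (fun i => w.1 i.rev), ?_, ?_⟩
    · intro i
      induction i using Fin.addCases with
      | left i =>
        simp only [Fin.rev_castAdd, ← Fin.natAdd_eq_addNat, Fin.addCases_left,
          Fin.addCases_right, Fin.rev_rev]
      | right i =>
        rw [show (Fin.natAdd n i).rev = Fin.castAdd n i.rev from by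
            rw [Fin.natAdd_eq_addNat, Fin.rev_addNat]]
        simp only [Fin.addCases_right, Fin.addCases_left]
    · have hs : ∀ i, (Fin.addCases w.1 (fun i => w.1 i.rev) : Fin (n+n) → Bool) i
          = Fin.addCases w.1 (fun i => w.1 i.rev) i.rev := by
        intro i
        induction i using Fin.addCases with
        | left i =>
          simp only [Fin.rev_castAdd, ← Fin.natAdd_eq_addNat, Fin.addCases_left,
            Fin.addCases_right, Fin.rev_rev]
        | right i =>
          rw [show (Fin.natAdd n i).rev = Fin.castAdd n i.rev from by
              rw [Fin.natAdd_eq_addNat, Fin.rev_addNat]]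
          simp only [Fin.addCases_right, Fin.addCases_left]
      rw [cnt_even _ hs]
      have : (fun i : Fin n => (Fin.addCases w.1 (fun i => w.1 i.rev) : Fin (n+n) → Bool)
          (Fin.castAdd n i)) = w.1 := funext fun i => Fin.addCases_left i
      rw [this]; exact w.2
  left_inv := by
    rintro ⟨v, hs, hc⟩
    apply Subtype.ext
    dsimp only
    funext i
    induction i using Fin.addCases with
    | left i => exact Fin.addCases_left i
    | right i =>
      show Fin.addCases _ _ (Fin.natAdd n i) = v (Fin.natAdd n i)
      rw [Fin.addCases_right]
      show v (Fin.castAdd n i.rev) = _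
      rw [Fin.natAdd_eq_addNat, hs (Fin.addNat i n), Fin.rev_addNat]
  right_inv := by
    rintro ⟨w, hw⟩
    apply Subtype.ext
    dsimp only
    funext i
    exact Fin.addCases_left i

private lemma rev_natAdd' {n : ℕ} (i : Fin n) :
    (Fin.natAdd (n+1) i).rev = Fin.castAdd n (Fin.castSucc i.rev) := by
  have := i.isLt
  ext
  simp [Fin.val_rev]
  omega

private lemma cnt_odd {n : ℕ} (v : Fin ((n+1)+n) → Bool) (hs : ∀ i, v i = v i.rev) :
    cnt v = 2 * cnt (fun i : Fin n => v (Fin.castAdd n i.castSucc))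
      + (if v (Fin.castAdd n (Fin.last n)) = true then 1 else 0) := by
  rw [cnt_eq_sum, Fin.sum_univ_add]
  rw [Fin.sum_univ_castSucc (f := fun i : Fin (n+1) => if v (Fin.castAdd n i) = true then 1 else 0)]
  have h2 : ∀ i : Fin n, v (Fin.natAdd (n+1) i) = v (Fin.castAdd n (Fin.castSucc i.rev)) :=
    fun i => by rw [hs (Fin.natAdd (n+1) i), rev_natAdd']
  simp_rw [h2]
  have h3 : ∑ i : Fin n, (if v (Fin.castAdd n (Fin.castSucc i.rev)) = true then 1 else 0)
      = ∑ i : Fin n, (if v (Fin.castAdd n i.castSucc) = true then 1 else 0) :=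
    Fintype.sum_equiv Fin.revPerm _ _ (fun i => rfl)
  rw [h3, cnt_eq_sum]
  ring

private def mkOdd (n k : ℕ) (u : Fin n → Bool) : Fin ((n+1)+n) → Bool :=
  Fin.addCases (Fin.snoc u (decide (k % 2 = 1))) (fun j => u j.rev)

private lemma mkOdd_sym (n k : ℕ) (u : Fin n → Bool) :
    ∀ i, mkOdd n k u i = mkOdd n k u i.rev := by
  intro i
  induction i using Fin.addCases with
  | left i =>
    rw [Fin.rev_castAdd]
    induction i using Fin.lastCases with
    | last =>
      rw [show Fin.addNat ((Fin.last n).rev) n = Fin.castAdd n (Fin.last n) from by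
        ext; simp [Fin.rev_last]]
    | cast t =>
      rw [show Fin.addNat ((Fin.castSucc t).rev) n = Fin.natAdd (n+1) t.rev from by
        have := t.isLt; ext; simp [Fin.val_rev]; omega]
      simp only [mkOdd, Fin.addCases_left, Fin.addCases_right, Fin.snoc_castSucc, Fin.rev_rev]
  | right j =>
    rw [rev_natAdd']
    simp only [mkOdd, Fin.addCases_left, Fin.addCases_right, Fin.snoc_castSucc]

private lemma mkOdd_cnt (n k : ℕ) (u : Fin n → Bool) :
    cnt (mkOdd n k u) = 2 * cnt u + k % 2 := by
  rw [cnt_odd _ (mkOdd_sym n k u)]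
  have h1 : (fun i : Fin n => mkOdd n k u (Fin.castAdd n i.castSucc)) = u := by
    funext i; simp [mkOdd, Fin.addCases_left, Fin.snoc_castSucc]
  have h2 : mkOdd n k u (Fin.castAdd n (Fin.last n)) = decide (k % 2 = 1) := by
    simp [mkOdd, Fin.addCases_left, Fin.snoc_last]
  rw [h1, h2]
  by_cases h : k % 2 = 1 <;> simp [h] <;> omega

private def oddEquiv (n k : ℕ) :
    {v : Fin ((n+1)+n) → Bool // (∀ i, v i = v i.rev) ∧ cnt v = k} ≃
    {u : Fin n → Bool // cnt u = k / 2} where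
  toFun v := ⟨fun i => v.1 (Fin.castAdd n i.castSucc), by
    have h := cnt_odd v.1 v.2.1
    rw [v.2.2] at h
    cases hb : v.1 (Fin.castAdd n (Fin.last n)) <;> rw [hb] at h <;> simp at h <;> omega⟩
  invFun u := ⟨mkOdd n k u.1, mkOdd_sym n k u.1, by rw [mkOdd_cnt, u.2]; omega⟩
  left_inv := by
    rintro ⟨v, hs, hc⟩
    apply Subtype.ext
    dsimp only
    funext i
    induction i using Fin.addCases with
    | left i =>
      induction i using Fin.lastCases with
      | last =>
        show mkOdd n k _ (Fin.castAdd n (Fin.last n)) = _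
        rw [show mkOdd n k (fun i : Fin n => v (Fin.castAdd n i.castSucc))
            (Fin.castAdd n (Fin.last n)) = decide (k % 2 = 1) from by
          simp [mkOdd, Fin.addCases_left, Fin.snoc_last]]
        have h := cnt_odd v hs
        rw [hc] at h
        cases hb : v (Fin.castAdd n (Fin.last n)) <;> rw [hb] at h <;> simp at h <;>
          simp <;> omega
      | cast t =>
        show mkOdd n k _ (Fin.castAdd n (Fin.castSucc t)) = _
        simp [mkOdd, Fin.addCases_left, Fin.snoc_castSucc]
    | right j =>
      show mkOdd n k _ (Fin.natAdd (n+1) j) = _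
      rw [show mkOdd n k (fun i : Fin n => v (Fin.castAdd n i.castSucc)) (Fin.natAdd (n+1) j)
          = v (Fin.castAdd n (Fin.castSucc j.rev)) from by
        simp [mkOdd, Fin.addCases_right]]
      rw [hs (Fin.natAdd (n+1) j), rev_natAdd']
  right_inv := by
    rintro ⟨u, hu⟩
    apply Subtype.ext
    dsimp only
    funext i
    simp [mkOdd, Fin.addCases_left, Fin.snoc_castSucc]

private lemma gamma_even (n k : ℕ) :
    Gamma (n+n) k = Fintype.card {w : Fin n → Bool // 2 * cnt w = k} :=
  Fintype.card_congr (evenEquiv n k)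

private lemma gamma_even_even (n j : ℕ) : Gamma (n+n) (j+j) = n.choose j := by
  rw [gamma_even, Fintype.card_congr (Equiv.subtypeEquivRight
    (fun w : Fin n → Bool => by constructor <;> intro h <;> omega :
      ∀ w : Fin n → Bool, 2 * cnt w = j + j ↔ cnt w = j))]
  exact card_cnt n j

private lemma gamma_even_odd (n k : ℕ) (hk : k % 2 = 1) : Gamma (n+n) k = 0 := by
  rw [gamma_even]
  rw [Fintype.card_eq_zero_iff]
  exact ⟨fun w => absurd w.2 (by omega)⟩

private lemma gamma_odd (n k : ℕ) : Gamma ((n+1)+n) k = n.choose (k / 2) :=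
  (Fintype.card_congr (oddEquiv n k)).trans (card_cnt n (k / 2))

theorem stmt_11 (m k : ℕ) (hk1 : 1 ≤ k) (hkm : k ≤ m - 1) (hpar : Even (m + k)) :
    Delta m k = Delta (m - 1) k + Delta (m - 1) (k - 1) := by
  have hm : 2 ≤ m := by omega
  obtain ⟨t, ht⟩ := hpar
  have gch : m.choose k = (m-1).choose k + (m-1).choose (k-1) := by
    obtain ⟨M, rfl⟩ : ∃ M, m = M + 1 := ⟨m - 1, by omega⟩
    obtain ⟨K, rfl⟩ : ∃ K, k = K + 1 := ⟨k - 1, by omega⟩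
    rw [Nat.choose_succ_succ, Nat.add_sub_cancel, Nat.add_sub_cancel, Nat.add_comm]
  rcases Nat.even_or_odd m with hme | hmo
  · obtain ⟨a, ha⟩ := hme
    have hke : k % 2 = 0 := by omega
    obtain ⟨j, hj⟩ : ∃ j, k = j + j := ⟨k / 2, by omega⟩
    have g1 : Gamma m k = a.choose j := by rw [ha, hj]; exact gamma_even_even a j
    have g2 : Gamma (m-1) k = (a-1).choose j := by
      rw [show m - 1 = ((a-1)+1) + (a-1) from by omega, gamma_odd]
      congr 1; omega
    have g3 : Gamma (m-1) (k-1) = (a-1).choose (j-1) := by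
      rw [show m - 1 = ((a-1)+1) + (a-1) from by omega, gamma_odd]
      congr 1; omega
    have gpas : a.choose j = (a-1).choose j + (a-1).choose (j-1) := by
      obtain ⟨A, rfl⟩ : ∃ A, a = A + 1 := ⟨a - 1, by omega⟩
      obtain ⟨J, rfl⟩ : ∃ J, j = J + 1 := ⟨j - 1, by omega⟩
      rw [Nat.choose_succ_succ, Nat.add_sub_cancel, Nat.add_sub_cancel, Nat.add_comm]
    simp only [Delta]
    rw [g1, g2, g3, gch, gpas]
    push_cast
    ring
  · obtain ⟨a, ha⟩ := hmo
    have hko : k % 2 = 1 := by omega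
    have g1 : Gamma m k = a.choose (k / 2) := by
      rw [show m = (a+1) + a from by omega]; exact gamma_odd a k
    have g2 : Gamma (m-1) k = 0 := by
      rw [show m - 1 = a + a from by omega]; exact gamma_even_odd a k hko
    have g3 : Gamma (m-1) (k-1) = a.choose (k / 2) := by
      rw [show m - 1 = a + a from by omega, show k - 1 = (k/2) + (k/2) from by omega]
      exact gamma_even_even a (k / 2)
    simp only [Delta]
    rw [g1, g2, g3, gch]
    push_cast
    ring
end

section
/- Define Γ(m,k) as the number of bilaterally symmetric binary vectors of length m with exactly k ones, and Δ(m,k) = C(m,k) − Γ(m,k). Then for 1 ≤ k ≤ m-1 with m + k odd, Δ(m,k) = Δ(m-1,k) + Δ(m-1,k-1) + 2·Γ(m-1,k-1). -/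
open Finset

private lemma card_filter_parity {m : ℕ} (v : Fin m → Bool) (hs : ∀ i, v i = v i.rev) :
    (((univ.filter fun i => v i = true).card : ZMod 2))
      = (((univ.filter fun i : Fin m => v i = true ∧ i.rev = i).card : ZMod 2)) := by
  classical
  have hff : (univ.filter fun i : Fin m => v i = true ∧ i.rev = i)
      = (univ.filter fun i : Fin m => v i = true).filter fun i => i.rev = i := by
    rw [Finset.filter_filter]
  have hsplit := Finset.card_filter_add_card_filter_not
    (s := univ.filter fun i : Fin m => v i = true) (p := fun i => i.rev = i)
  have hM : ((((univ.filter fun i : Fin m => v i = true).filter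
      fun i => ¬ i.rev = i)).card : ZMod 2) = 0 := by
    have h0 : ∑ _i ∈ ((univ.filter fun i : Fin m => v i = true).filter fun i => ¬ i.rev = i),
        (1 : ZMod 2) = 0 := by
      refine Finset.sum_involution (fun a _ => a.rev) (fun a ha => by decide) ?_ ?_ ?_
      · intro a ha _
        simp only [Finset.mem_filter] at ha
        exact ha.2
      · intro a ha
        simp only [Finset.mem_filter, Finset.mem_univ, true_and] at ha ⊢
        refine ⟨(hs a).symm.trans ha.1, ?_⟩
        rw [Fin.rev_rev]
        intro h
        exact ha.2 h.symm
      · intro a ha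
        exact Fin.rev_rev a
    calc ((((univ.filter fun i : Fin m => v i = true).filter
          fun i => ¬ i.rev = i)).card : ZMod 2)
        = ∑ _i ∈ ((univ.filter fun i : Fin m => v i = true).filter fun i => ¬ i.rev = i),
            (1 : ZMod 2) := by rw [Finset.sum_const, nsmul_eq_mul, mul_one]
      _ = 0 := h0
  rw [hff]
  have hcast := congrArg (fun n : ℕ => (n : ZMod 2)) hsplit
  push_cast at hcast
  rw [← hcast, hM, add_zero]

private lemma even_of_sym {m k : ℕ} (hm : Even m) (v : Fin m → Bool) (hs : ∀ i, v i = v i.rev)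
    (hw : (univ.filter fun i => v i = true).card = k) : Even k := by
  have h := card_filter_parity v hs
  have hF : (univ.filter fun i : Fin m => v i = true ∧ i.rev = i) = ∅ := by
    ext i
    simp only [Finset.mem_filter, Finset.mem_univ, true_and, Finset.notMem_empty, iff_false,
      not_and]
    intro _ hrev
    have h1 : (i.rev : ℕ) = i := congrArg Fin.val hrev
    rw [Fin.val_rev] at h1
    obtain ⟨a, rfl⟩ := hm
    have := i.isLt
    omega
  rw [hw, hF] at h
  simp only [Finset.card_empty, Nat.cast_zero] at h
  have : (2 : ℕ) ∣ k := (ZMod.natCast_eq_zero_iff k 2).mp h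
  exact even_iff_two_dvd.mpr this

private lemma mid_true_iff {m k : ℕ} (v : Fin m → Bool) (hs : ∀ i, v i = v i.rev)
    (hw : (univ.filter fun i => v i = true).card = k) (c : Fin m) (hc : c.rev = c) :
    (v c = true ↔ Odd k) := by
  have h := card_filter_parity v hs
  have huniq : ∀ i : Fin m, i.rev = i → i = c := by
    intro i hi
    have h1 : (i.rev : ℕ) = i := congrArg Fin.val hi
    have h2 : (c.rev : ℕ) = c := congrArg Fin.val hc
    rw [Fin.val_rev] at h1 h2
    have := i.isLt
    have := c.isLt
    exact Fin.ext (by omega)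
  have hodd : Odd k ↔ (k : ZMod 2) = 1 := by
    rw [Nat.odd_iff, ← ZMod.natCast_mod]
    rcases Nat.mod_two_eq_zero_or_one k with hh | hh <;> rw [hh] <;> simp
  by_cases hvc : v c = true
  · have hF : (univ.filter fun i : Fin m => v i = true ∧ i.rev = i) = {c} := by
      ext i
      simp only [Finset.mem_filter, Finset.mem_univ, true_and, Finset.mem_singleton]
      constructor
      · rintro ⟨_, hrev⟩; exact huniq i hrev
      · rintro rfl; exact ⟨hvc, hc⟩
    rw [hw, hF] at h
    simp only [Finset.card_singleton, Nat.cast_one] at h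
    simp [hvc, hodd, h]
  · have hF : (univ.filter fun i : Fin m => v i = true ∧ i.rev = i) = ∅ := by
      ext i
      simp only [Finset.mem_filter, Finset.mem_univ, true_and, Finset.notMem_empty, iff_false,
        not_and]
      intro hv hrev
      exact hvc (huniq i hrev ▸ hv)
    rw [hw, hF] at h
    simp only [Finset.card_empty, Nat.cast_zero] at h
    constructor
    · intro hh; exact absurd hh hvc
    · intro hh
      rw [hodd, h] at hh
      exact absurd hh (by decide)

private lemma gamma_even_zero {m k : ℕ} (hm : Even m) (hk : Odd k) : Gamma m k = 0 := by
  unfold Gamma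
  rw [Fintype.card_eq_zero_iff]
  exact ⟨fun x => (Nat.not_odd_iff_even.mpr (even_of_sym hm x.1 x.2.1 x.2.2)) hk⟩

private lemma gamma_odd_pred {m k : ℕ} (hm : Odd m) (hk : Odd k) :
    Gamma m k = Gamma m (k - 1) := by
  classical
  have hm1 : m % 2 = 1 := Nat.odd_iff.mp hm
  have hk1 : k % 2 = 1 := Nat.odd_iff.mp hk
  have hcpos : m / 2 < m := by omega
  set c : Fin m := ⟨m / 2, hcpos⟩ with hcdef
  have hc : c.rev = c := by
    apply Fin.ext
    rw [Fin.val_rev]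
    show m - (m / 2 + 1) = m / 2
    omega
  have hsymup : ∀ (v : Fin m → Bool) (b : Bool), (∀ i, v i = v i.rev) →
      ∀ i, Function.update v c b i = Function.update v c b i.rev := by
    intro v b hs i
    rcases eq_or_ne i c with rfl | hne
    · rw [hc]
    · have hner : i.rev ≠ c := fun h => hne (by rw [← Fin.rev_rev i, h, hc])
      rw [Function.update_of_ne hne, Function.update_of_ne hner]
      exact hs i
  have hfilfalse : ∀ (v : Fin m → Bool),
      (univ.filter fun i => Function.update v c false i = true)
        = (univ.filter fun i => v i = true).erase c := by
    intro v
    ext i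
    rcases eq_or_ne i c with rfl | hne
    · simp
    · simp [Function.update_of_ne hne, Finset.mem_erase, hne]
  have hfiltrue : ∀ (v : Fin m → Bool),
      (univ.filter fun i => Function.update v c true i = true)
        = insert c (univ.filter fun i => v i = true) := by
    intro v
    ext i
    rcases eq_or_ne i c with rfl | hne
    · simp
    · simp [Function.update_of_ne hne, hne]
  unfold Gamma
  apply Fintype.card_congr
  refine
    { toFun := fun x => ⟨Function.update x.1 c false, hsymup x.1 false x.2.1, ?_⟩
      invFun := fun y => ⟨Function.update y.1 c true, hsymup y.1 true y.2.1, ?_⟩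
      left_inv := ?_
      right_inv := ?_ }
  · have hvc : x.1 c = true := (mid_true_iff x.1 x.2.1 x.2.2 c hc).mpr hk
    rw [hfilfalse x.1, Finset.card_erase_of_mem (by simp [hvc]), x.2.2]
  · have hvc : y.1 c = false := by
      cases h : y.1 c
      · rfl
      · exfalso
        have := (mid_true_iff y.1 y.2.1 y.2.2 c hc).mp h
        rw [Nat.odd_iff] at this
        omega
    rw [hfiltrue y.1, Finset.card_insert_of_notMem (by simp [hvc]), y.2.2]
    omega
  · intro x
    apply Subtype.ext
    have hvc : x.1 c = true := (mid_true_iff x.1 x.2.1 x.2.2 c hc).mpr hk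
    show Function.update (Function.update x.1 c false) c true = x.1
    rw [Function.update_idem]
    funext i
    rcases eq_or_ne i c with rfl | h
    · rw [Function.update_self, hvc]
    · rw [Function.update_of_ne h]
  · intro y
    apply Subtype.ext
    have hvc : y.1 c = false := by
      cases h : y.1 c
      · rfl
      · exfalso
        have := (mid_true_iff y.1 y.2.1 y.2.2 c hc).mp h
        rw [Nat.odd_iff] at this
        omega
    show Function.update (Function.update y.1 c true) c false = y.1
    rw [Function.update_idem]
    funext i
    rcases eq_or_ne i c with rfl | h
    · rw [Function.update_self, hvc]
    · rw [Function.update_of_ne h]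

private lemma card_filter_succAbove {n : ℕ} (p : Fin (n + 1)) (v : Fin (n + 1) → Bool)
    (hp : v p = false) :
    (univ.filter fun j => v (p.succAbove j) = true).card
      = (univ.filter fun i => v i = true).card := by
  classical
  rw [← Finset.card_image_of_injective
    (univ.filter fun j => v (p.succAbove j) = true) (Fin.succAbove_right_injective (p := p))]
  congr 1
  ext i
  simp only [Finset.mem_image, Finset.mem_filter, Finset.mem_univ, true_and]
  constructor
  · rintro ⟨j, hj, rfl⟩; exact hj
  · intro hi
    have hne : i ≠ p := by rintro rfl; rw [hp] at hi; exact absurd hi (by simp)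
    obtain ⟨j, rfl⟩ := Fin.exists_succAbove_eq hne
    exact ⟨j, hi, rfl⟩

private lemma gamma_succ_even {n k : ℕ} (hn : Even n) (hk : Even k) :
    Gamma (n + 1) k = Gamma n k := by
  classical
  have hn2 : n % 2 = 0 := Nat.even_iff.mp hn
  have hk2 : k % 2 = 0 := Nat.even_iff.mp hk
  set c : Fin (n + 1) := ⟨n / 2, by omega⟩ with hcdef
  have hc : c.rev = c := by
    apply Fin.ext
    rw [Fin.val_rev]
    show n + 1 - (n / 2 + 1) = n / 2
    omega
  have hrevsucc : ∀ j : Fin n, (c.succAbove j).rev = c.succAbove j.rev := by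
    intro j
    have hj := j.isLt
    rcases Nat.lt_or_ge (j : ℕ) (n / 2) with h | h
    · have e1 : c.succAbove j = j.castSucc :=
        Fin.succAbove_of_castSucc_lt _ _ (by simp [Fin.lt_def, hcdef]; omega)
      have e2 : c.succAbove j.rev = j.rev.succ :=
        Fin.succAbove_of_le_castSucc _ _ (by simp [Fin.le_def, Fin.val_rev, hcdef]; omega)
      rw [e1, e2]
      apply Fin.ext
      simp only [Fin.val_rev, Fin.coe_castSucc, Fin.val_succ]
      omega
    · have e1 : c.succAbove j = j.succ :=
        Fin.succAbove_of_le_castSucc _ _ (by simp [Fin.le_def, hcdef]; omega)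
      have e2 : c.succAbove j.rev = j.rev.castSucc :=
        Fin.succAbove_of_castSucc_lt _ _ (by simp [Fin.lt_def, Fin.val_rev, hcdef]; omega)
      rw [e1, e2]
      apply Fin.ext
      simp only [Fin.val_rev, Fin.coe_castSucc, Fin.val_succ]
      omega
  have hmidfalse : ∀ (v : Fin (n + 1) → Bool), (∀ i, v i = v i.rev) →
      (univ.filter fun i => v i = true).card = k → v c = false := by
    intro v hs hw
    cases h : v c
    · rfl
    · exfalso
      have := (mid_true_iff v hs hw c hc).mp h
      rw [Nat.odd_iff] at this
      omega
  unfold Gamma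
  apply Fintype.card_congr
  refine
    { toFun := fun x => ⟨fun j => x.1 (c.succAbove j), ?_, ?_⟩
      invFun := fun y => ⟨c.insertNth false y.1, ?_, ?_⟩
      left_inv := ?_
      right_inv := ?_ }
  · intro j
    exact (x.2.1 (c.succAbove j)).trans (congrArg x.1 (hrevsucc j))
  · rw [card_filter_succAbove c x.1 (hmidfalse x.1 x.2.1 x.2.2)]
    exact x.2.2
  · intro i
    rcases eq_or_ne i c with rfl | hne
    · exact congrArg _ hc.symm
    · obtain ⟨j, rfl⟩ := Fin.exists_succAbove_eq hne
      rw [hrevsucc j, Fin.insertNth_apply_succAbove (α := fun _ => Bool),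
        Fin.insertNth_apply_succAbove (α := fun _ => Bool)]
      exact y.2.1 j
  · have hsame : (Fin.insertNth (α := fun _ => Bool) c false y.1) c = false :=
      Fin.insertNth_apply_same (α := fun _ => Bool) c false y.1
    rw [← card_filter_succAbove c (c.insertNth false y.1) hsame]
    simp only [Fin.insertNth_apply_succAbove (α := fun _ => Bool)]
    exact y.2.2
  · intro x
    apply Subtype.ext
    funext i
    rcases eq_or_ne i c with rfl | hne
    · have h1 : (Fin.insertNth (α := fun _ => Bool) c false (fun j => x.1 (c.succAbove j))) c
          = false := Fin.insertNth_apply_same (α := fun _ => Bool) c false _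
      exact h1.trans (hmidfalse x.1 x.2.1 x.2.2).symm
    · obtain ⟨j, rfl⟩ := Fin.exists_succAbove_eq hne
      exact Fin.insertNth_apply_succAbove (α := fun _ => Bool) c false _ j
  · intro y
    apply Subtype.ext
    funext j
    exact Fin.insertNth_apply_succAbove (α := fun _ => Bool) c false y.1 j

theorem stmt_12 (m k : ℕ) (hk1 : 1 ≤ k) (hkm : k ≤ m - 1) (hpar : Odd (m + k)) :
    Delta m k = Delta (m - 1) k + Delta (m - 1) (k - 1) + 2 * (Gamma (m - 1) (k - 1) : ℤ) := by
  have hpar2 : (m + k) % 2 = 1 := Nat.odd_iff.mp hpar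
  have hm2 : 2 ≤ m := by omega
  have hpascal : Nat.choose m k = Nat.choose (m - 1) (k - 1) + Nat.choose (m - 1) k := by
    obtain ⟨mm, rfl⟩ : ∃ mm, m = mm + 1 := ⟨m - 1, by omega⟩
    obtain ⟨kk, rfl⟩ : ∃ kk, k = kk + 1 := ⟨k - 1, by omega⟩
    simp [Nat.choose_succ_succ]
  rcases Nat.even_or_odd m with hme | hmo
  · have hme2 : m % 2 = 0 := Nat.even_iff.mp hme
    have hko : Odd k := Nat.odd_iff.mpr (by omega)
    have h0 : Gamma m k = 0 := gamma_even_zero hme hko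
    have h1 : Gamma (m - 1) k = Gamma (m - 1) (k - 1) :=
      gamma_odd_pred (Nat.odd_iff.mpr (by omega)) hko
    unfold Delta
    rw [h0, h1, hpascal]
    push_cast
    ring
  · have hmo2 : m % 2 = 1 := Nat.odd_iff.mp hmo
    have hke : Even k := Nat.even_iff.mpr (by omega)
    have h0 : Gamma (m - 1) (k - 1) = 0 :=
      gamma_even_zero (Nat.even_iff.mpr (by omega)) (Nat.odd_iff.mpr (by omega))
    have h1 : Gamma m k = Gamma (m - 1) k := by
      have h := gamma_succ_even (n := m - 1) (k := k) (Nat.even_iff.mpr (by omega)) hke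
      have hm1 : m - 1 + 1 = m := by omega
      rw [hm1] at h
      exact h
    unfold Delta
    rw [h0, h1, hpascal]
    push_cast
    ring
end

section
/- Let the type weights of a Fibonacci parsimonious game with n players be defined by w_0 = 0, w_1 = 1, w_t = w_{t-1} + w_{t-2} for 2 ≤ t ≤ n-3, and w_{n-2} = (2-1)·w_{n-3} + w_{n-4} (i.e., the free type vector is x = (2,1,1,...,1,2)). Then the individual weights satisfy w_i = f_i for i = 1,...,n-2, w_{n-1} = f_{n-2} and w_n = f_{n-1}, where f is the Fibonacci sequence with f_1 = f_2 = 1. -/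
theorem stmt_15 (n : ℕ) (hn : 6 ≤ n)
    (f : ℕ → ℕ) (hf1 : f 1 = 1) (hf2 : f 2 = 1)
    (hf : ∀ t, 1 ≤ t → f (t + 2) = f (t + 1) + f t)
    -- the free type vector x = (2,1,...,1,2) with h - 1 = n - 3 components
    (x : ℕ → ℕ) (hx1 : x 1 = 2) (hxtop : x (n - 3) = 2)
    (hxmid : ∀ t, 2 ≤ t → t ≤ n - 4 → x t = 1)
    -- the type weights W of the game with h = n - 2 types
    (W : ℕ → ℕ) (hW0 : W 0 = 0) (hW1 : W 1 = 1)
    (hWrec : ∀ t, 2 ≤ t → t ≤ n - 3 → W t = x (t - 1) * W (t - 1) + W (t - 2))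
    (hWtop : W (n - 2) = (x (n - 3) - 1) * W (n - 3) + W (n - 4))
    -- the individual weights w: 2 players of type 1, 2 players of type n - 3,
    -- one player of each of the other types
    (w : ℕ → ℕ) (hw1 : w 1 = W 1) (hw2 : w 2 = W 1)
    (hwmid : ∀ i, 3 ≤ i → i ≤ n - 3 → w i = W (i - 1))
    (hwv1 : w (n - 2) = W (n - 3)) (hwv2 : w (n - 1) = W (n - 3))
    (hwtop : w n = W (n - 2)) :
    (∀ i, 1 ≤ i → i ≤ n - 2 → w i = f i) ∧
      w (n - 1) = f (n - 2) ∧ w n = f (n - 1) := by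
  -- key: W t = f (t+1) for 1 ≤ t ≤ n-3
  have key : ∀ t, 1 ≤ t → t ≤ n - 3 → W t = f (t + 1) := by
    intro t
    induction t using Nat.strong_induction_on with
    | _ t ih =>
      intro h1 h2
      match t with
      | 1 => simpa [hW1] using hf2.symm
      | 2 =>
          have hr := hWrec 2 (by omega) h2
          have h3 : f 3 = f 2 + f 1 := hf 1 (by omega)
          simp [hx1, hW1, hW0, hf1, hf2] at hr ⊢
          omega
      | (k+3) =>
          have hr := hWrec (k+3) (by omega) h2
          have hx : x (k+2) = 1 := hxmid (k+2) (by omega) (by omega)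
          have e1 : k + 3 - 1 = k + 2 := by omega
          have e2 : k + 3 - 2 = k + 1 := by omega
          rw [e1, e2, hx, one_mul] at hr
          have i1 : W (k+2) = f (k+3) := ih (k+2) (by omega) (by omega) (by omega)
          have i2 : W (k+1) = f (k+2) := ih (k+1) (by omega) (by omega) (by omega)
          have h3 : f (k+4) = f (k+3) + f (k+2) := by
            have := hf (k+2) (by omega)
            convert this using 2 <;> omega
          rw [hr, i1, i2, ← h3]
  have k3 : W (n-3) = f (n-2) := by
    have := key (n-3) (by omega) (le_refl _)
    have e : n - 3 + 1 = n - 2 := by omega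
    rwa [e] at this
  have k4 : W (n-4) = f (n-3) := by
    have := key (n-4) (by omega) (by omega)
    have e : n - 4 + 1 = n - 3 := by omega
    rwa [e] at this
  have ktop : W (n-2) = f (n-1) := by
    have hfib : f (n-1) = f (n-2) + f (n-3) := by
      have := hf (n-3) (by omega)
      have e1 : n - 3 + 2 = n - 1 := by omega
      have e2 : n - 3 + 1 = n - 2 := by omega
      rwa [e1, e2] at this
    rw [hWtop, hxtop, k3, k4, hfib]; ring
  refine ⟨?_, by rw [hwv2, k3], by rw [hwtop, ktop]⟩
  intro i h1 h2
  match i with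
  | 1 => rw [hw1, hW1, hf1]
  | 2 => rw [hw2, hW1, hf2]
  | (k+3) =>
      rcases Nat.lt_or_ge (k+3) (n-2) with h | h
      · have hm := hwmid (k+3) (by omega) (by omega)
        have e : k + 3 - 1 = k + 2 := by omega
        rw [hm, e, key (k+2) (by omega) (by omega)]
      · have e : k + 3 = n - 2 := by omega
        rw [e, hwv1, k3]
end
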